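/- Decomposition of rewriting sequences: let x⃗ = (x₁,…,xₙ) be pairwise distinct variables and M learning data with n columns. (a) If (t, [M/x⃗]) ⟶ⁿ (t′, Θ′) (an n-step rewriting sequence), then there exists a tuple pattern t″ of arity n such that ((x₁,…,xₙ), [M/x⃗]) ⟶ⁿ (t″, Θ′) and t′ = [t″/x⃗]t. (b) Conversely, if ((x₁,…,xₙ), [M/x⃗]) ⟶ⁿ (t, Θ′), then for every tuple pattern t₀ with variables among x⃗, (t₀, [M/x⃗]) ⟶ⁿ ([t/x⃗]t₀, Θ′). -/

import Mathlib

namespace STPaper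

variable {A V : Type}

/-- A word over the alphabet `A`. -/
abbrev Word (A : Type) := List A

/-- A pattern: a finite word over `A ⊕ V` (letters and variables). -/
abbrev Pat (A V : Type) := List (A ⊕ V)

/-- A tuple pattern: a finite tuple of patterns. -/
abbrev TP (A V : Type) := List (Pat A V)

/-- A column of learning data: one word per row. -/
abbrev Col (A : Type) := List (Word A)

/-- Learning data, represented as its list of columns. -/
abbrev Data (A : Type) := List (Col A)

/-- A data-substitution `[M/x⃗]`: the number `m` of rows together with the list pairing each
variable of `x⃗` with the corresponding column of `M`. -/
structure DSub (A V : Type) where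
  m : ℕ
  entries : List (V × Col A)

/-- Apply a word-valued substitution to a pattern. -/
def substPatW (θ : V → Word A) (p : Pat A V) : Word A :=
  (p.map (Sum.elim (fun a => [a]) θ)).flatten

/-- Look up the column assigned to a variable by a data-substitution (default: all-ε). -/
def lookupCol [DecidableEq V] (E : List (V × Col A)) (x : V) : Col A :=
  match E.find? (fun e => decide (e.1 = x)) with
  | some e => e.2
  | none => []

/-- The substitution corresponding to the `i`-th row of a data-substitution. -/
def DSub.rowSub [DecidableEq V] (Θ : DSub A V) (i : ℕ) : V → Word A :=
  fun x => (lookupCol Θ.entries x).getD i []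

/-- `Θ.apply t` : the matrix `Θt` (as a list of columns, each of length `Θ.m`). -/
def DSub.apply [DecidableEq V] (Θ : DSub A V) (t : TP A V) : Data A :=
  t.map (fun p => (List.range Θ.m).map (fun i => substPatW (Θ.rowSub i) p))

/-- Well-formedness of a data-substitution: pairwise-distinct variables and
all columns of length `m`. -/
def DSub.WF (Θ : DSub A V) : Prop :=
  (Θ.entries.map Prod.fst).Nodup ∧ ∀ e ∈ Θ.entries, e.2.length = Θ.m

/-- The free variables of a tuple pattern. -/
def fvTP (t : TP A V) : Set V := {x | Sum.inr x ∈ t.flatten}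

/-- Substitution of a single pattern `q` for the variable `x` in a pattern. -/
def substVar [DecidableEq A] [DecidableEq V] (x : V) (q : Pat A V) (p : Pat A V) : Pat A V :=
  (p.map (fun s => if s = Sum.inr x then q else [s])).flatten

/-- Substitution of a single pattern `q` for the variable `x` in a tuple pattern. -/
def substVarTP [DecidableEq A] [DecidableEq V] (x : V) (q : Pat A V) (t : TP A V) : TP A V :=
  t.map (substVar x q)

/-- Simultaneous substitution `[qs/xs]p` of the patterns `qs` for the variables `xs`. -/
def substVars [DecidableEq V] (xs : List V) (qs : List (Pat A V)) (p : Pat A V) : Pat A V :=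
  (p.map (fun s =>
    match s with
    | Sum.inl a => [Sum.inl a]
    | Sum.inr x =>
      match (xs.zip qs).find? (fun e => decide (e.1 = x)) with
      | some e => e.2
      | none => [Sum.inr x])).flatten

/-- Simultaneous substitution `[qs/xs]t` on a tuple pattern. -/
def substVarsTP [DecidableEq V] (xs : List V) (qs : List (Pat A V)) (t : TP A V) : TP A V :=
  t.map (substVars xs qs)

/-- A column is the all-ε column. -/
def allEps (c : Col A) : Prop := ∀ w ∈ c, w = []

/-- The trivial tuple pattern `(x₁, …, xₙ)`. -/
def trivTP (xs : List V) : TP A V := xs.map (fun x => [Sum.inr x])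

section
variable [DecidableEq A] [DecidableEq V]

/-- The rewriting relation ⟶ on pairs of a tuple pattern and a data-substitution. -/
inductive Step : (TP A V × DSub A V) → (TP A V × DSub A V) → Prop
  | pre (t : TP A V) (m : ℕ) (E : List (V × Col A)) (i j : ℕ)
      (hi : i < E.length) (hj : j < E.length) (hij : i ≠ j)
      (s : Col A) (hslen : s.length = (E[i]'hi).2.length)
      (hpre : (E[j]'hj).2 = List.zipWith (· ++ ·) (E[i]'hi).2 s)
      (hne : ¬ allEps (E[i]'hi).2)
      (x' : V) (hx1 : x' ∉ E.map Prod.fst) (hx2 : Sum.inr x' ∉ t.flatten) :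
      Step (t, ⟨m, E⟩)
        (substVarTP (E[j]'hj).1 [Sum.inr (E[i]'hi).1, Sum.inr x'] t,
         ⟨m, E.set j (x', s)⟩)
  | cpre (t : TP A V) (m : ℕ) (E : List (V × Col A)) (j : ℕ)
      (hj : j < E.length) (a : A) (s : Col A)
      (hpre : (E[j]'hj).2 = s.map (fun w => a :: w))
      (x' : V) (hx1 : x' ∉ E.map Prod.fst) (hx2 : Sum.inr x' ∉ t.flatten) :
      Step (t, ⟨m, E⟩)
        (substVarTP (E[j]'hj).1 [Sum.inl a, Sum.inr x'] t, ⟨m, E.set j (x', s)⟩)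
  | eps (t : TP A V) (m : ℕ) (E : List (V × Col A)) (j : ℕ)
      (hj : j < E.length) (heps : allEps (E[j]'hj).2) :
      Step (t, ⟨m, E⟩) (substVarTP (E[j]'hj).1 [] t, ⟨m, E.eraseIdx j⟩)

/-- `n`-step rewriting. -/
def StepN : ℕ → (TP A V × DSub A V) → (TP A V × DSub A V) → Prop
  | 0 => fun c₁ c₂ => c₁ = c₂
  | n + 1 => fun c₁ c₃ => ∃ c₂, Step c₁ c₂ ∧ StepN n c₂ c₃

end

/-- The reduction relation ⇒ on tuple patterns. -/
inductive PStep : TP A V → TP A V → Prop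
  | pre (t : TP A V) (i j : ℕ) (hi : i < t.length) (hj : j < t.length)
      (hij : i ≠ j) (p' : Pat A V)
      (hdec : t[j]'hj = (t[i]'hi) ++ p') (hne : t[i]'hi ≠ []) :
      PStep t (t.set j p')
  | cpre (t : TP A V) (j : ℕ) (hj : j < t.length) (a : A) (p' : Pat A V)
      (hdec : t[j]'hj = Sum.inl a :: p') :
      PStep t (t.set j p')
  | eps (t : TP A V) (j : ℕ) (hj : j < t.length) (heps : t[j]'hj = []) :
      PStep t (t.eraseIdx j)

/-- A tuple pattern is solvable if it reduces to a trivial tuple of pairwise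
distinct variables. -/
def Solvable (t : TP A V) : Prop :=
  ∃ ys : List V, ys.Nodup ∧ Relation.ReflTransGen PStep t (trivTP ys)

/-- The language of a tuple pattern. -/
def lang (t : TP A V) : Set (List (Word A)) :=
  {w | ∃ θ : V → Word A, w = t.map (substPatW θ)}

/-- `M ⊨ t` : there is a data-substitution `Θ` (with `rows` rows) with `Θt = M`. -/
def Models [DecidableEq V] (M : Data A) (rows : ℕ) (t : TP A V) : Prop :=
  ∃ Θ : DSub A V, Θ.m = rows ∧ Θ.WF ∧ Θ.apply t = M

/-- `M ⊨ₛ t` : additionally, no variable of `t` is mapped to ε in every row. -/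
def SModels [DecidableEq V] (M : Data A) (rows : ℕ) (t : TP A V) : Prop :=
  ∃ Θ : DSub A V, Θ.m = rows ∧ Θ.WF ∧ Θ.apply t = M ∧
    ∀ x ∈ fvTP t, ¬ allEps (lookupCol Θ.entries x)

/-- Renaming the variables of a tuple pattern. -/
def renameTP (ρ : V → V) (t : TP A V) : TP A V :=
  t.map (List.map (Sum.map id ρ))

/-- The measure `#t` of a tuple pattern. -/
def tpMeasure (t : TP A V) : ℕ := (t.map List.length).sum + t.length

/-- `size(M)`. -/
def dataSize (M : Data A) : ℕ :=
  (M.map (fun c => (c.map (fun w => w.length + 1)).sum)).sum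

/-- Learning data (as columns) whose rows enumerate the given list of tuples. -/
def colsOfRows (n : ℕ) (rows : List (List (Word A))) : Data A :=
  (List.range n).map (fun j => rows.map (fun r => r.getD j []))

/-- `m ⊨ₛ t` for a (possibly infinite) set of tuples of words. -/
def SetSModels (S : Set (List (Word A))) (t : TP A V) : Prop :=
  ∃ θ : S → V → Word A,
    (∀ v : S, (v : List (Word A)) = t.map (substPatW (θ v))) ∧
    ∀ x ∈ fvTP t, ∃ v : S, θ v x ≠ []

/-- A rule instance of the ⇒ relation. -/
inductive RuleInst (A V : Type) where
  | pre (i j : ℕ)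
  | cpre (j : ℕ) (a : A)
  | eps (j : ℕ)

/-- The reduction step derived by a given rule instance. -/
def RuleStep : RuleInst A V → TP A V → TP A V → Prop
  | .pre i j, t, t' => ∃ (hi : i < t.length) (hj : j < t.length),
      i ≠ j ∧ t[i]'hi ≠ [] ∧ ∃ p', t[j]'hj = (t[i]'hi) ++ p' ∧ t' = t.set j p'
  | .cpre j a, t, t' => ∃ (_ : j < t.length) (p' : Pat A V),
      t.getD j [] = Sum.inl a :: p' ∧ t' = t.set j p'
  | .eps j, t, t' => ∃ (_ : j < t.length), t.getD j [] = ([] : Pat A V) ∧ t' = t.eraseIdx j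

/-- Well-definedness of the residual of a tuple pattern along a rule instance. -/
def ResDefined : RuleInst A V → TP A V → Prop
  | .pre i j, t => i < t.length ∧ j < t.length ∧ (t.getD i []) <+: (t.getD j [])
  | .cpre j a, t => j < t.length ∧ ∃ p', t.getD j [] = Sum.inl a :: p'
  | .eps j, t => j < t.length ∧ t.getD j [] = ([] : Pat A V)

/-- The residual of a tuple pattern along a rule instance. -/
def residual : RuleInst A V → TP A V → TP A V
  | .pre i j, t => t.set j ((t.getD j []).drop (t.getD i []).length)
  | .cpre j _, t => t.set j ((t.getD j []).drop 1)
  | .eps j, t => t.eraseIdx j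

/-- The reduction relation ⇒ extended with the postfix rules. -/
inductive PStepX : TP A V → TP A V → Prop
  | pre (t : TP A V) (i j : ℕ) (hi : i < t.length) (hj : j < t.length)
      (hij : i ≠ j) (p' : Pat A V)
      (hdec : t[j]'hj = (t[i]'hi) ++ p') (hne : t[i]'hi ≠ []) :
      PStepX t (t.set j p')
  | cpre (t : TP A V) (j : ℕ) (hj : j < t.length) (a : A) (p' : Pat A V)
      (hdec : t[j]'hj = Sum.inl a :: p') :
      PStepX t (t.set j p')
  | eps (t : TP A V) (j : ℕ) (hj : j < t.length) (heps : t[j]'hj = []) :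
      PStepX t (t.eraseIdx j)
  | post (t : TP A V) (i j : ℕ) (hi : i < t.length) (hj : j < t.length)
      (hij : i ≠ j) (p' : Pat A V)
      (hdec : t[j]'hj = p' ++ (t[i]'hi)) (hne : t[i]'hi ≠ []) :
      PStepX t (t.set j p')
  | cpost (t : TP A V) (j : ℕ) (hj : j < t.length) (a : A) (p' : Pat A V)
      (hdec : t[j]'hj = p' ++ [Sum.inl a]) :
      PStepX t (t.set j p')

section DecompAux
variable [DecidableEq A] [DecidableEq V]

private lemma substVar_append (y : V) (q : Pat A V) (p₁ p₂ : Pat A V) :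
    substVar y q (p₁ ++ p₂) = substVar y q p₁ ++ substVar y q p₂ := by
  simp [substVar]

private lemma substVar_flatten (y : V) (q : Pat A V) (L : List (Pat A V)) :
    substVar y q L.flatten = (L.map (substVar y q)).flatten := by
  induction L with
  | nil => rfl
  | cons p L ih =>
    simp only [List.flatten_cons, List.map_cons, substVar_append, ih]

private def blk (xs : List V) (qs : List (Pat A V)) : A ⊕ V → Pat A V
  | Sum.inl a => [Sum.inl a]
  | Sum.inr x =>
    match (xs.zip qs).find? (fun e => decide (e.1 = x)) with
    | some e => e.2
    | none => [Sum.inr x]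

private lemma substVars_def (xs : List V) (qs : List (Pat A V)) (p : Pat A V) :
    substVars xs qs p = (p.map (blk xs qs)).flatten := by
  unfold substVars
  congr 1

private lemma find_succ {xs : List V} {qs : List (Pat A V)} {x : V}
    (hx : x ∈ xs) (hlen : qs.length = xs.length) :
    ∃ e ∈ xs.zip qs,
      (xs.zip qs).find? (fun e => decide (e.1 = x)) = some e ∧ e.1 = x := by
  have h : ∃ e ∈ xs.zip qs, (fun e : V × Pat A V => decide (e.1 = x)) e = true := by
    obtain ⟨n, hn, hget⟩ := List.mem_iff_getElem.mp hx
    refine ⟨(xs.zip qs)[n]'(by simp [List.length_zip, hlen]; omega),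
      List.getElem_mem _, ?_⟩
    simp [List.getElem_zip, hget]
  have hsome := List.find?_isSome.mpr h
  obtain ⟨e, he⟩ := Option.isSome_iff_exists.mp hsome
  exact ⟨e, List.mem_of_find?_eq_some he, he, by simpa using List.find?_some he⟩

private lemma find_none {xs : List V} {qs : List (Pat A V)} {x : V} (hx : x ∉ xs) :
    (xs.zip qs).find? (fun e => decide (e.1 = x)) = none := by
  rw [List.find?_eq_none]
  rintro ⟨a, b⟩ he hp
  simp only [decide_eq_true_eq] at hp
  exact hx (hp ▸ (List.of_mem_zip he).1)

private lemma blk_inr_not {xs : List V} {qs : List (Pat A V)} {x : V} (hx : x ∉ xs) :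
    blk xs qs (Sum.inr x) = [Sum.inr x] := by
  simp [blk, find_none hx]

private lemma substVar_single_ne (y : V) (q : Pat A V) (s : A ⊕ V) (h : s ≠ Sum.inr y) :
    substVar y q [s] = [s] := by simp [substVar, h]

private lemma length_substVarTP (y : V) (q : Pat A V) (t : TP A V) :
    (substVarTP y q t).length = t.length := by simp [substVarTP]

private lemma length_trivTP (xs : List V) : (trivTP (A := A) xs).length = xs.length := by
  simp [trivTP]

private lemma comp_lemma (xs : List V) (t'' t : TP A V) (y : V) (q : Pat A V)
    (hlen : t''.length = xs.length)
    (hy : y ∉ xs → Sum.inr y ∉ t.flatten) :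
    substVarTP y q (substVarsTP xs t'' t) = substVarsTP xs (substVarTP y q t'') t := by
  unfold substVarTP substVarsTP
  rw [List.map_map]
  apply List.map_congr_left
  intro p hp
  show substVar y q (substVars xs t'' p) = substVars xs (t''.map (substVar y q)) p
  rw [substVars_def, substVars_def, substVar_flatten, List.map_map]
  congr 1
  apply List.map_congr_left
  intro s hs
  show substVar y q (blk xs t'' s) = blk xs (t''.map (substVar y q)) s
  cases s with
  | inl a => simp [blk, substVar]
  | inr x =>
    by_cases hxxs : x ∈ xs
    · obtain ⟨e, hmem, hfind, hfst⟩ := find_succ hxxs hlen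
      have hlen2 : (t''.map (substVar y q)).length = xs.length := by simpa
      have hzip : xs.zip (t''.map (substVar y q))
          = (xs.zip t'').map (Prod.map id (substVar y q)) := List.zip_map_right
      have hfind2 : (xs.zip (t''.map (substVar y q))).find? (fun e => decide (e.1 = x))
          = some (e.1, substVar y q e.2) := by
        rw [hzip, List.find?_map]
        have hpc : ((fun e : V × Pat A V => decide (e.1 = x)) ∘ Prod.map id (substVar y q))
            = fun e : V × Pat A V => decide (e.1 = x) := by
          funext e; cases e; rfl
        rw [hpc, hfind]
        rfl
      have h1 : blk xs t'' (Sum.inr x) = e.2 := by simp [blk, hfind]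
      have h2 : blk xs (t''.map (substVar y q)) (Sum.inr x) = substVar y q e.2 := by
        simp [blk, hfind2]
      rw [h1, h2]
    · rw [blk_inr_not hxxs, blk_inr_not hxxs]
      have hxy : x ≠ y := by
        intro rfl'
        subst rfl'
        exact hy hxxs (List.mem_flatten.mpr ⟨p, hp, hs⟩)
      exact substVar_single_ne _ _ _ (by simpa using hxy)

private lemma mem_flatten_substVarsTP {xs : List V} {t'' t : TP A V} {z : V}
    (hlen : t''.length = xs.length)
    (h : Sum.inr z ∈ (substVarsTP xs t'' t).flatten) :
    Sum.inr z ∈ t''.flatten ∨ (Sum.inr z ∈ t.flatten ∧ z ∉ xs) := by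
  rw [List.mem_flatten] at h
  obtain ⟨p', hp', hz⟩ := h
  obtain ⟨p, hp, rfl⟩ := List.mem_map.mp hp'
  rw [substVars_def, List.mem_flatten] at hz
  obtain ⟨b, hb, hzb⟩ := hz
  obtain ⟨s, hs, rfl⟩ := List.mem_map.mp hb
  cases s with
  | inl a => simp [blk] at hzb
  | inr x =>
    by_cases hx : x ∈ xs
    · obtain ⟨e, hmem, hfind, hfst⟩ := find_succ hx hlen
      have h1 : blk xs t'' (Sum.inr x) = e.2 := by simp [blk, hfind]
      rw [h1] at hzb
      obtain ⟨e1, e2⟩ := e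
      exact Or.inl (List.mem_flatten.mpr ⟨e2, (List.of_mem_zip hmem).2, hzb⟩)
    · rw [blk_inr_not hx] at hzb
      have : z = x := by simpa using hzb
      subst this
      exact Or.inr ⟨List.mem_flatten.mpr ⟨p, hp, hs⟩, hx⟩

private lemma mem_flatten_substVarsTP_of {xs : List V} {t'' t : TP A V} {z : V}
    (hz : Sum.inr z ∈ t.flatten) (hzxs : z ∉ xs) :
    Sum.inr z ∈ (substVarsTP xs t'' t).flatten := by
  rw [List.mem_flatten] at hz
  obtain ⟨p, hp, hz⟩ := hz
  refine List.mem_flatten.mpr ⟨substVars xs t'' p, List.mem_map_of_mem hp, ?_⟩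
  rw [substVars_def, List.mem_flatten]
  exact ⟨[Sum.inr z], List.mem_map.mpr ⟨Sum.inr z, hz, blk_inr_not hzxs⟩, by simp⟩

private lemma mem_flatten_substVarTP {y : V} {q : Pat A V} {t : TP A V} {z : V}
    (h : Sum.inr z ∈ (substVarTP y q t).flatten) :
    Sum.inr z ∈ q ∨ (Sum.inr z ∈ t.flatten ∧ z ≠ y) := by
  rw [List.mem_flatten] at h
  obtain ⟨p', hp', hz⟩ := h
  obtain ⟨p, hp, rfl⟩ := List.mem_map.mp hp'
  unfold substVar at hz
  rw [List.mem_flatten] at hz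
  obtain ⟨b, hb, hzb⟩ := hz
  obtain ⟨s, hs, rfl⟩ := List.mem_map.mp hb
  by_cases hsy : s = Sum.inr y
  · rw [if_pos hsy] at hzb
    exact Or.inl hzb
  · rw [if_neg hsy] at hzb
    have hsz : Sum.inr z = s := by simpa using hzb
    refine Or.inr ⟨List.mem_flatten.mpr ⟨p, hp, hsz ▸ hs⟩, ?_⟩
    intro rfl'
    exact hsy (hsz.symm ▸ (rfl' ▸ rfl))

private lemma mem_set_of_ne {l : List V} {j : ℕ} (hj : j < l.length) {z a : V}
    (hz : z ∈ l) (hne : z ≠ l[j]'hj) : z ∈ l.set j a := by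
  obtain ⟨n, hn, rfl⟩ := List.mem_iff_getElem.mp hz
  have hnj : j ≠ n := by
    intro h; exact hne (by simp [h])
  rw [List.mem_iff_getElem]
  exact ⟨n, by simpa using hn, by rw [List.getElem_set_ne hnj]⟩

private lemma nodup_set {l : List V} {j : ℕ} {a : V} (h : l.Nodup) (ha : a ∉ l) :
    (l.set j a).Nodup := by
  induction l generalizing j with
  | nil => simp
  | cons b bs ih =>
    rw [List.nodup_cons] at h
    cases j with
    | zero =>
      rw [List.set_cons_zero, List.nodup_cons]
      exact ⟨fun h' => ha (List.mem_cons_of_mem _ h'), h.2⟩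
    | succ j =>
      rw [List.set_cons_succ, List.nodup_cons]
      refine ⟨fun hmem => ?_, ih h.2 fun h' => ha (List.mem_cons_of_mem _ h')⟩
      rcases List.mem_or_eq_of_mem_set hmem with h1 | h1
      · exact h.1 h1
      · exact ha (h1 ▸ List.mem_cons_self)

private lemma mem_eraseIdx_of_ne {l : List V} {j : ℕ} (hj : j < l.length) {z : V}
    (hz : z ∈ l) (hne : z ≠ l[j]'hj) : z ∈ l.eraseIdx j := by
  induction l generalizing j with
  | nil => simp at hz
  | cons b bs ih =>
    cases j with
    | zero =>
      simp only [List.eraseIdx]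
      rcases List.mem_cons.mp hz with rfl | h
      · exact absurd rfl hne
      · exact h
    | succ j =>
      simp only [List.eraseIdx]
      rcases List.mem_cons.mp hz with rfl | h
      · exact List.mem_cons_self
      · exact List.mem_cons_of_mem _ (ih (by simpa using hj) h (by simpa using hne))

private lemma map_eraseIdx' {α β : Type} (f : α → β) (l : List α) (j : ℕ) :
    (l.eraseIdx j).map f = (l.map f).eraseIdx j := by
  induction l generalizing j with
  | nil => rfl
  | cons a t ih => cases j <;> simp [List.eraseIdx, ih]

private lemma fst_eq_snd_of_mem_zip_self {l : List V} {c : V × V} (h : c ∈ l.zip l) :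
    c.1 = c.2 := by
  obtain ⟨n, hn, hc⟩ := List.mem_iff_getElem.mp h
  rw [List.getElem_zip] at hc
  rw [← hc]

private lemma flatten_map_singleton (p : Pat A V) :
    (p.map (fun s => [s])).flatten = p := by
  induction p with
  | nil => rfl
  | cons a t ih => simp [ih]

private lemma substVarsTP_triv (xs : List V) (t : TP A V) :
    substVarsTP xs (trivTP xs) t = t := by
  unfold substVarsTP
  conv_rhs => rw [← List.map_id t]
  apply List.map_congr_left
  intro p _
  rw [substVars_def]
  have hblk : ∀ s ∈ p, blk xs (trivTP xs) s = [s] := by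
    intro s _
    cases s with
    | inl a => rfl
    | inr x =>
      by_cases hx : x ∈ xs
      · obtain ⟨e, hmem, hfind, hfst⟩ := find_succ (qs := trivTP (A := A) xs) hx (by simp [trivTP])
        have h1 : blk xs (trivTP xs) (Sum.inr x) = e.2 := by simp [blk, hfind]
        rw [h1]
        have hz : xs.zip (trivTP (A := A) xs)
            = (xs.zip xs).map (Prod.map id (fun x : V => [Sum.inr x])) := by
          unfold trivTP; exact List.zip_map_right
        rw [hz] at hmem
        obtain ⟨c, hc, rfl⟩ := List.mem_map.mp hmem
        have h12 := fst_eq_snd_of_mem_zip_self hc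
        simp only [Prod.map] at hfst ⊢
        simp only [id_eq] at hfst
        rw [← h12, hfst] <;> try rw [hfst]
      · exact blk_inr_not hx
  rw [List.map_congr_left hblk, flatten_map_singleton]
  rfl

end DecompAux
section DecompMain
variable [DecidableEq A] [DecidableEq V]

private lemma main_b (xs : List V) (t₀ : TP A V)
    (h₀ : ∀ z, Sum.inr z ∈ t₀.flatten → z ∈ xs) :
    ∀ (k : ℕ) (t'' : TP A V) (E : List (V × Col A)) (m : ℕ) (t : TP A V) (Θ' : DSub A V),
      t''.length = xs.length →
      StepN k (t'', ⟨m, E⟩) (t, Θ') →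
      StepN k (substVarsTP xs t'' t₀, ⟨m, E⟩) (substVarsTP xs t t₀, Θ') := by
  intro k
  induction k with
  | zero =>
    intro t'' E m t Θ' hlen h
    simp only [StepN] at h ⊢
    injection h with h1 h2
    subst h1
    rw [← h2]
  | succ k ih =>
    intro t'' E m t Θ' hlen h
    obtain ⟨c₂, hstep, hrest⟩ := h
    cases hstep with
    | pre _ _ _ i j hi hj hij s hslen hpre hne x' hx1 hx2 =>
      have hx2' : Sum.inr x' ∉ (substVarsTP xs t'' t₀).flatten := by
        intro hmem
        rcases mem_flatten_substVarsTP hlen hmem with h | ⟨h, hnx⟩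
        · exact hx2 h
        · exact hnx (h₀ _ h)
      have hcomp := comp_lemma xs t'' t₀ (E[j]'hj).1
        [Sum.inr (E[i]'hi).1, Sum.inr x'] hlen
        (fun hy hmem => hy (h₀ _ hmem))
      refine ⟨_, Step.pre _ m E i j hi hj hij s hslen hpre hne x' hx1 hx2', ?_⟩
      rw [hcomp]
      exact ih _ _ _ _ _ (by rw [length_substVarTP, hlen]) hrest
    | cpre _ _ _ j hj a s hpre x' hx1 hx2 =>
      have hx2' : Sum.inr x' ∉ (substVarsTP xs t'' t₀).flatten := by
        intro hmem
        rcases mem_flatten_substVarsTP hlen hmem with h | ⟨h, hnx⟩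
        · exact hx2 h
        · exact hnx (h₀ _ h)
      have hcomp := comp_lemma xs t'' t₀ (E[j]'hj).1
        [Sum.inl a, Sum.inr x'] hlen
        (fun hy hmem => hy (h₀ _ hmem))
      refine ⟨_, Step.cpre _ m E j hj a s hpre x' hx1 hx2', ?_⟩
      rw [hcomp]
      exact ih _ _ _ _ _ (by rw [length_substVarTP, hlen]) hrest
    | eps _ _ _ j hj heps =>
      have hcomp := comp_lemma xs t'' t₀ (E[j]'hj).1 [] hlen
        (fun hy hmem => hy (h₀ _ hmem))
      refine ⟨_, Step.eps _ m E j hj heps, ?_⟩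
      rw [hcomp]
      exact ih _ _ _ _ _ (by rw [length_substVarTP, hlen]) hrest

private lemma main_a (xs : List V) (t : TP A V) :
    ∀ (k : ℕ) (t'' : TP A V) (E : List (V × Col A)) (m : ℕ) (t' : TP A V) (Θ' : DSub A V),
      t''.length = xs.length →
      (E.map Prod.fst).Nodup →
      (∀ z, Sum.inr z ∈ t''.flatten → z ∈ E.map Prod.fst) →
      (∀ y ∈ E.map Prod.fst, y ∉ xs → Sum.inr y ∉ t.flatten) →
      StepN k (substVarsTP xs t'' t, ⟨m, E⟩) (t', Θ') →
      ∃ t''' : TP A V, t'''.length = xs.length ∧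
        StepN k (t'', ⟨m, E⟩) (t''', Θ') ∧ t' = substVarsTP xs t''' t := by
  intro k
  induction k with
  | zero =>
    intro t'' E m t' Θ' hlen _ _ _ h
    simp only [StepN] at h
    injection h with h1 h2
    exact ⟨t'', hlen, by simp only [StepN]; rw [h2], h1.symm⟩
  | succ k ih =>
    intro t'' E m t' Θ' hlen hnd hfv hJ h
    obtain ⟨c₂, hstep, hrest⟩ := h
    cases hstep with
    | pre _ _ _ i j hi hj hij s hslen hpre hne x' hx1 hx2 =>
      have hx2'' : Sum.inr x' ∉ t''.flatten := fun hm => hx1 (hfv _ hm)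
      have hyxs : (E[j]'hj).1 ∈ E.map Prod.fst :=
        List.mem_map_of_mem (f := Prod.fst) (List.getElem_mem hj)
      have hcomp := comp_lemma xs t'' t (E[j]'hj).1
        [Sum.inr (E[i]'hi).1, Sum.inr x'] hlen (hJ _ hyxs)
      rw [hcomp] at hrest
      have hmap : (E.set j (x', s)).map Prod.fst = (E.map Prod.fst).set j x' := by
        rw [List.map_set]
      have hlen₂ : (substVarTP (E[j]'hj).1 [Sum.inr (E[i]'hi).1, Sum.inr x'] t'').length
          = xs.length := by rw [length_substVarTP, hlen]
      have hnd₂ : ((E.set j (x', s)).map Prod.fst).Nodup := by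
        rw [hmap]; exact nodup_set hnd hx1
      have hfv₂ : ∀ z, Sum.inr z ∈
          (substVarTP (E[j]'hj).1 [Sum.inr (E[i]'hi).1, Sum.inr x'] t'').flatten →
          z ∈ (E.set j (x', s)).map Prod.fst := by
        intro z hz
        rw [hmap]
        rcases mem_flatten_substVarTP hz with hq | ⟨hmem, hzy⟩
        · have hq' : z = (E[i]'hi).1 ∨ z = x' := by
            simpa using hq
          rcases hq' with rfl | hzx
          · have hi' : i < ((E.map Prod.fst).set j x').length := by simpa using hi
            have hmm := List.getElem_mem hi'
            rwa [List.getElem_set_ne (Ne.symm hij), List.getElem_map] at hmm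
          · rw [hzx]
            have hj' : j < ((E.map Prod.fst).set j x').length := by simpa using hj
            have hmm := List.getElem_mem hj'
            rwa [List.getElem_set_self] at hmm
        · refine mem_set_of_ne (by simpa using hj) (hfv z hmem) ?_
          rw [List.getElem_map]
          exact hzy
      have hJ₂ : ∀ y ∈ (E.set j (x', s)).map Prod.fst, y ∉ xs → Sum.inr y ∉ t.flatten := by
        intro y hy hyx
        rw [hmap] at hy
        rcases List.mem_or_eq_of_mem_set hy with hmm | rfl
        · exact hJ y hmm hyx
        · exact fun hmem => hx2 (mem_flatten_substVarsTP_of hmem hyx)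
      obtain ⟨t''', hl3, hsteps, heq⟩ := ih _ _ m t' Θ' hlen₂ hnd₂ hfv₂ hJ₂ hrest
      exact ⟨t''', hl3, ⟨_, Step.pre t'' m E i j hi hj hij s hslen hpre hne x' hx1 hx2'',
        hsteps⟩, heq⟩
    | cpre _ _ _ j hj a s hpre x' hx1 hx2 =>
      have hx2'' : Sum.inr x' ∉ t''.flatten := fun hm => hx1 (hfv _ hm)
      have hyxs : (E[j]'hj).1 ∈ E.map Prod.fst :=
        List.mem_map_of_mem (f := Prod.fst) (List.getElem_mem hj)
      have hcomp := comp_lemma xs t'' t (E[j]'hj).1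
        [Sum.inl a, Sum.inr x'] hlen (hJ _ hyxs)
      rw [hcomp] at hrest
      have hmap : (E.set j (x', s)).map Prod.fst = (E.map Prod.fst).set j x' := by
        rw [List.map_set]
      have hlen₂ : (substVarTP (E[j]'hj).1 [Sum.inl a, Sum.inr x'] t'').length
          = xs.length := by rw [length_substVarTP, hlen]
      have hnd₂ : ((E.set j (x', s)).map Prod.fst).Nodup := by
        rw [hmap]; exact nodup_set hnd hx1
      have hfv₂ : ∀ z, Sum.inr z ∈
          (substVarTP (E[j]'hj).1 [Sum.inl a, Sum.inr x'] t'').flatten →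
          z ∈ (E.set j (x', s)).map Prod.fst := by
        intro z hz
        rw [hmap]
        rcases mem_flatten_substVarTP hz with hq | ⟨hmem, hzy⟩
        · have hq' : z = x' := by simpa using hq
          rw [hq']
          have hj' : j < ((E.map Prod.fst).set j x').length := by simpa using hj
          have hmm := List.getElem_mem hj'
          rwa [List.getElem_set_self] at hmm
        · refine mem_set_of_ne (by simpa using hj) (hfv z hmem) ?_
          rw [List.getElem_map]
          exact hzy
      have hJ₂ : ∀ y ∈ (E.set j (x', s)).map Prod.fst, y ∉ xs → Sum.inr y ∉ t.flatten := by
        intro y hy hyx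
        rw [hmap] at hy
        rcases List.mem_or_eq_of_mem_set hy with hmm | rfl
        · exact hJ y hmm hyx
        · exact fun hmem => hx2 (mem_flatten_substVarsTP_of hmem hyx)
      obtain ⟨t''', hl3, hsteps, heq⟩ := ih _ _ m t' Θ' hlen₂ hnd₂ hfv₂ hJ₂ hrest
      exact ⟨t''', hl3, ⟨_, Step.cpre t'' m E j hj a s hpre x' hx1 hx2'', hsteps⟩, heq⟩
    | eps _ _ _ j hj heps =>
      have hyxs : (E[j]'hj).1 ∈ E.map Prod.fst :=
        List.mem_map_of_mem (f := Prod.fst) (List.getElem_mem hj)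
      have hcomp := comp_lemma xs t'' t (E[j]'hj).1 [] hlen (hJ _ hyxs)
      rw [hcomp] at hrest
      have hmap : (E.eraseIdx j).map Prod.fst = (E.map Prod.fst).eraseIdx j :=
        map_eraseIdx' _ _ _
      have hlen₂ : (substVarTP (E[j]'hj).1 [] t'').length = xs.length := by
        rw [length_substVarTP, hlen]
      have hnd₂ : ((E.eraseIdx j).map Prod.fst).Nodup := by
        rw [hmap]; exact List.Nodup.sublist (List.eraseIdx_sublist _ _) hnd
      have hfv₂ : ∀ z, Sum.inr z ∈ (substVarTP (E[j]'hj).1 [] t'').flatten →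
          z ∈ (E.eraseIdx j).map Prod.fst := by
        intro z hz
        rw [hmap]
        rcases mem_flatten_substVarTP hz with hq | ⟨hmem, hzy⟩
        · simp at hq
        · refine mem_eraseIdx_of_ne (by simpa using hj) (hfv z hmem) ?_
          rw [List.getElem_map]
          exact hzy
      have hJ₂ : ∀ y ∈ (E.eraseIdx j).map Prod.fst, y ∉ xs → Sum.inr y ∉ t.flatten := by
        intro y hy hyx
        rw [hmap] at hy
        exact hJ y (List.Sublist.mem hy (List.eraseIdx_sublist _ _)) hyx
      obtain ⟨t''', hl3, hsteps, heq⟩ := ih _ _ m t' Θ' hlen₂ hnd₂ hfv₂ hJ₂ hrest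
      exact ⟨t''', hl3, ⟨_, Step.eps t'' m E j hj heps, hsteps⟩, heq⟩

end DecompMain
/-- **Decomposition of rewriting sequences.**
(a) If `(t, [M/x⃗]) ⟶ᵏ (t′, Θ′)` then there is a tuple pattern `t″` of arity `n` with
`((x₁,…,xₙ), [M/x⃗]) ⟶ᵏ (t″, Θ′)` and `t′ = [t″/x⃗]t`.
(b) Conversely, if `((x₁,…,xₙ), [M/x⃗]) ⟶ᵏ (t, Θ′)` then for every tuple pattern `t₀`
with variables among `x⃗`, `(t₀, [M/x⃗]) ⟶ᵏ ([t/x⃗]t₀, Θ′)`. -/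
theorem decomposition
    [DecidableEq A] [DecidableEq V] [Nontrivial A] [Countable V] [Infinite V]
    (xs : List V) (hxs : xs.Nodup) (M : Data A) (m : ℕ)
    (hMn : M.length = xs.length) (hcols : ∀ c ∈ M, c.length = m) (k : ℕ) :
    (∀ (t t' : TP A V) (Θ' : DSub A V),
        StepN k (t, ⟨m, xs.zip M⟩) (t', Θ') →
        ∃ t'' : TP A V, t''.length = xs.length ∧
          StepN k (trivTP xs, ⟨m, xs.zip M⟩) (t'', Θ') ∧
          t' = substVarsTP xs t'' t) ∧
    (∀ (t : TP A V) (Θ' : DSub A V),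
        StepN k (trivTP xs, ⟨m, xs.zip M⟩) (t, Θ') →
        ∀ t₀ : TP A V, fvTP t₀ ⊆ {x | x ∈ xs} →
          StepN k (t₀, ⟨m, xs.zip M⟩) (substVarsTP xs t t₀, Θ')) := by
  have hmapfst : (xs.zip M).map Prod.fst = xs :=
    List.map_fst_zip (le_of_eq hMn.symm)
  constructor
  · intro t t' Θ' h
    have h' : StepN k (substVarsTP xs (trivTP xs) t, ⟨m, xs.zip M⟩) (t', Θ') := by
      rwa [substVarsTP_triv]
    obtain ⟨t''', h1, h2, h3⟩ := main_a xs t k (trivTP xs) (xs.zip M) m t' Θ'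
      (length_trivTP xs)
      (by rwa [hmapfst])
      (by
        intro z hz
        rw [hmapfst]
        simp only [trivTP, List.mem_flatten] at hz
        obtain ⟨l, hl, hzl⟩ := hz
        obtain ⟨x, hx, rfl⟩ := List.mem_map.mp hl
        have : z = x := by simpa using hzl
        exact this ▸ hx)
      (by
        rw [hmapfst]
        intro y hy hyn
        exact absurd hy hyn)
      h'
    exact ⟨t''', h1, h2, h3⟩
  · intro t Θ' h t₀ hsub
    have hb := main_b xs t₀ (fun z hz => hsub hz) k (trivTP xs) (xs.zip M) m t Θ'
      (length_trivTP xs) h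
    rwa [substVarsTP_triv] at hb

end STPaper
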